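/- arXiv:1110.1013 — 2 statements merged into one kernel-verified Lean document; each statement's English description precedes it below -/
import Mathlib

section
/- With the notation below, the mixed-sign Coxeter element satisfies ω_{Γ,s} = s_1 s_2 ⋯ s_n = −U⁻¹ Uᵀ; equivalently, U · (s_1 s_2 ⋯ s_n) = −Uᵀ. -/
open Matrix

noncomputable section

/-- The strictly upper-triangular part `A⁺` of a matrix `A`. -/
def Aplus (n : ℕ) (A : Matrix (Fin n) (Fin n) ℝ) : Matrix (Fin n) (Fin n) ℝ :=
  fun i j => if i < j then A i j else 0

/-- `U = I_s − A⁺`. -/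
def Umat (n : ℕ) (A : Matrix (Fin n) (Fin n) ℝ) (s : Fin n → ℝ) :
    Matrix (Fin n) (Fin n) ℝ :=
  Matrix.diagonal s - Aplus n A

/-- The Coxeter generator `s_i`: it agrees with the identity except in row `i`,
where `(s_i)_{ii} = −1` and `(s_i)_{ij} = s(i)·a_{ij}` for `j ≠ i`. -/
def coxGen (n : ℕ) (A : Matrix (Fin n) (Fin n) ℝ) (s : Fin n → ℝ) (i : Fin n) :
    Matrix (Fin n) (Fin n) ℝ :=
  fun j k =>
    if j = i then (if k = i then -1 else s i * A i k)
    else (if j = k then 1 else 0)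

lemma Umat_apply (n : ℕ) (A : Matrix (Fin n) (Fin n) ℝ) (s : Fin n → ℝ) (i j : Fin n) :
    Umat n A s i j = (if i = j then s i else 0) - (if i < j then A i j else 0) := by
  simp [Umat, Aplus, Matrix.diagonal, Matrix.sub_apply]

lemma mul_coxGen (n : ℕ) (A : Matrix (Fin n) (Fin n) ℝ) (s : Fin n → ℝ)
    (M : Matrix (Fin n) (Fin n) ℝ) (i0 i j : Fin n) :
    (M * coxGen n A s i0) i j =
      (if j = i0 then -1 else s i0 * A i0 j) * M i i0 +
      (if j = i0 then 0 else M i j) := by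
  rw [Matrix.mul_apply]
  have h : ∀ l : Fin n, M i l * coxGen n A s i0 l j =
      (if l = i0 then (if j = i0 then -1 else s i0 * A i0 j) * M i i0 else 0) +
      (if l = j then (if j = i0 then 0 else M i j) else 0) := by
    intro l
    unfold coxGen
    by_cases h1 : l = i0 <;> by_cases h2 : l = j <;>
      simp [h1, h2] <;> subst_vars <;> simp_all <;> ring
  rw [Finset.sum_congr rfl (fun l _ => h l), Finset.sum_add_distrib]
  simp

set_option maxHeartbeats 1600000 in
theorem stmt_1 (n : ℕ) (hn : 1 ≤ n) (A : Matrix (Fin n) (Fin n) ℝ)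
    (hsym : ∀ i j, A i j = A j i) (hdiag : ∀ i, A i i = 0)
    (h01 : ∀ i j, A i j = 0 ∨ A i j = 1)
    (s : Fin n → ℝ) (hs : ∀ i, s i = 1 ∨ s i = -1) :
    ((List.finRange n).map (coxGen n A s)).prod
      = -((Umat n A s)⁻¹ * (Umat n A s)ᵀ) ∧
    Umat n A s * ((List.finRange n).map (coxGen n A s)).prod = -(Umat n A s)ᵀ := by
  set U := Umat n A s with hU
  have hss : ∀ i : Fin n, s i * s i = 1 := by
    intro i; rcases hs i with h | h <;> rw [h] <;> norm_num
  have hUa : ∀ i j : Fin n, U i j =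
      (if (i:ℕ) = (j:ℕ) then s i else 0) - (if (i:ℕ) < (j:ℕ) then A i j else 0) := by
    intro i j
    rw [hU, Umat_apply]
    simp only [Fin.ext_iff, Fin.lt_def]
  have inv : ∀ k : ℕ, k ≤ n → ∀ i j : Fin n,
      (U * (((List.finRange n).take k).map (coxGen n A s)).prod) i j =
        if (j : ℕ) < k then (if (i : ℕ) < k then -(Uᵀ i j) else 0)
        else (if (i : ℕ) < k then 0 else U i j) := by
    intro k
    induction k with
    | zero => intro _ i j; simp
    | succ k ih =>
      intro hk i j
      have hkn : k < n := hk
      have ihk := ih (le_of_lt hkn)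
      have htake : (List.finRange n).take (k + 1) =
          (List.finRange n).take k ++ [(⟨k, hkn⟩ : Fin n)] := by
        rw [List.take_succ]
        congr 1
        rw [List.getElem?_eq_getElem (by simpa using hkn)]
        simp
      rw [htake, List.map_append, List.prod_append, List.map_singleton,
        List.prod_singleton, ← Matrix.mul_assoc, mul_coxGen]
      rw [ihk i ⟨k, hkn⟩, ihk i j]
      have hsymjk : A j ⟨k, hkn⟩ = A ⟨k, hkn⟩ j := hsym j ⟨k, hkn⟩
      have hsymkj : A ⟨k, hkn⟩ j = A j ⟨k, hkn⟩ := hsym ⟨k, hkn⟩ j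
      have hsk : s ⟨k, hkn⟩ * s ⟨k, hkn⟩ = 1 := hss ⟨k, hkn⟩
      rcases Nat.lt_trichotomy (i : ℕ) k with hik | hik | hik
      · simp only [Matrix.transpose_apply, hUa, Fin.ext_iff, Fin.lt_def, Fin.val_mk]
        split_ifs <;>
          first
            | (exfalso; omega)
            | ring1
            | linear_combination A ⟨k, hkn⟩ j * hsk - hsymjk
            | linear_combination A ⟨k, hkn⟩ j * hsk + hsymjk
            | linear_combination A ⟨k, hkn⟩ j * hsk
            | linear_combination hsymjk
            | linear_combination (-1 : ℝ) * hsymjk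
            | (have hjeq : j = (⟨k, hkn⟩ : Fin n) := Fin.eq_of_val_eq (by simp only [Fin.val_mk]; omega)
               subst hjeq
               first
                 | ring1
                 | (simp only [hdiag]; ring1)
                 | linear_combination s (⟨k, hkn⟩ : Fin n) * hsk
                 | linear_combination (-(s (⟨k, hkn⟩ : Fin n))) * hsk)
      · have hieq : i = ⟨k, hkn⟩ := by
          apply Fin.eq_of_val_eq; simpa using hik
        subst hieq
        simp only [Matrix.transpose_apply, hUa, Fin.ext_iff, Fin.lt_def, Fin.val_mk]
        split_ifs <;>
          first
            | (exfalso; omega)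
            | ring1
            | linear_combination A ⟨k, hkn⟩ j * hsk - hsymjk
            | linear_combination A ⟨k, hkn⟩ j * hsk + hsymjk
            | linear_combination A ⟨k, hkn⟩ j * hsk
            | linear_combination hsymjk
            | linear_combination (-1 : ℝ) * hsymjk
            | (have hjeq : j = (⟨k, hkn⟩ : Fin n) := Fin.eq_of_val_eq (by simp only [Fin.val_mk]; omega)
               subst hjeq
               first
                 | ring1
                 | (simp only [hdiag]; ring1)
                 | linear_combination s (⟨k, hkn⟩ : Fin n) * hsk
                 | linear_combination (-(s (⟨k, hkn⟩ : Fin n))) * hsk)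
      · simp only [Matrix.transpose_apply, hUa, Fin.ext_iff, Fin.lt_def, Fin.val_mk]
        split_ifs <;>
          first
            | (exfalso; omega)
            | ring1
            | linear_combination A ⟨k, hkn⟩ j * hsk - hsymjk
            | linear_combination A ⟨k, hkn⟩ j * hsk + hsymjk
            | linear_combination A ⟨k, hkn⟩ j * hsk
            | linear_combination hsymjk
            | linear_combination (-1 : ℝ) * hsymjk
            | (have hjeq : j = (⟨k, hkn⟩ : Fin n) := Fin.eq_of_val_eq (by simp only [Fin.val_mk]; omega)
               subst hjeq
               first
                 | ring1
                 | (simp only [hdiag]; ring1)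
                 | linear_combination s (⟨k, hkn⟩ : Fin n) * hsk
                 | linear_combination (-(s (⟨k, hkn⟩ : Fin n))) * hsk)
  have htaken : (List.finRange n).take n = List.finRange n :=
    List.take_of_length_le (by simp)
  have key : U * ((List.finRange n).map (coxGen n A s)).prod = -Uᵀ := by
    ext i j
    have h := inv n le_rfl i j
    rw [htaken] at h
    rw [h]
    simp [Fin.is_lt]
  have hbt : U.BlockTriangular id := by
    intro i j hij
    rw [hUa]
    have h1 : ¬ ((i:ℕ) = (j:ℕ)) := by
      have : (j:ℕ) < (i:ℕ) := hij
      omega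
    have h2 : ¬ ((i:ℕ) < (j:ℕ)) := by
      have : (j:ℕ) < (i:ℕ) := hij
      omega
    simp [h1, h2]
  have hdet : IsUnit U.det := by
    rw [Matrix.det_of_upperTriangular hbt]
    have h : ∀ i : Fin n, U i i = s i := by
      intro i; rw [hUa]; simp
    rw [Finset.prod_congr rfl (fun i _ => h i)]
    apply isUnit_iff_ne_zero.mpr
    apply Finset.prod_ne_zero_iff.mpr
    intro i _
    rcases hs i with h | h <;> rw [h] <;> norm_num
  constructor
  · have h2 := congrArg (fun M => U⁻¹ * M) key
    simp only [← Matrix.mul_assoc, Matrix.nonsing_inv_mul U hdet, Matrix.one_mul] at h2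
    rw [h2, Matrix.mul_neg]
  · exact key

end
end

section
/- For each integer g ≥ 1, let LT_g(x) = x^{2g} − x^{g+1} − x^g − x^{g−1} + 1 and let λ_g = |LT_g| be its house. Then the genus-normalized values converge: lim_{g→∞} (λ_g)^g = (3 + √5)/2, i.e. one plus the golden mean. -/
/-!
If `z ≠ 0` is a root of `LT_g` and `w = z ^ g`, dividing by `z ^ g` gives `w + w⁻¹ = z + 1 + z⁻¹`.
The Joukowsky map `w ↦ w + w⁻¹` sends the circle `‖w‖ = R` onto the ellipse with foci `±2` and
major axis `R + R⁻¹`, hence `‖w‖ + ‖w‖⁻¹ ≤ ‖z‖ + ‖z‖⁻¹ + 1`. For a root of largest modulus this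
first gives `‖z‖ ^ (g - 1) ≤ 3`, so `‖z‖ = 1 + O(1/g)` by Bernoulli's inequality, and then
`‖w‖ + ‖w‖⁻¹ ≤ 3 + O(1/g)`, which puts `‖w‖` within `O(1/g)` of the larger root `ρ` of
`t + t⁻¹ = 3`. A real root in `[1, 2]` gives the matching lower bound `ρ ≤ ‖w‖`.
-/

open Polynomial

noncomputable section

/-- The Lanneau–Thiffeault polynomial `LT_g(x) = x^{2g} − x^{g+1} − x^g − x^{g−1} + 1`. -/
def LTpoly (g : ℕ) : Polynomial ℤ :=
  Polynomial.X ^ (2 * g) - Polynomial.X ^ (g + 1) - Polynomial.X ^ g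
    - Polynomial.X ^ (g - 1) + 1

/-- The house of an integer polynomial: the maximum of `|z|` over its complex
roots `z`. -/
def house (p : Polynomial ℤ) : ℝ :=
  sSup ((fun z : ℂ => ‖z‖) '' {z : ℂ | (p.map (Int.castRingHom ℂ)).IsRoot z})

local notation "ρ" => (3 + Real.sqrt 5) / 2

lemma rho_sq : ρ ^ 2 = 3 * ρ - 1 := by
  have h5 : Real.sqrt 5 ^ 2 = 5 := Real.sq_sqrt (by norm_num)
  linear_combination h5 / 4

lemma five_halves_le_rho : 5 / 2 ≤ ρ := by
  have : 2 ≤ Real.sqrt 5 := Real.le_sqrt_of_sq_le (by norm_num)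
  linarith

lemma rho_le_of_three_le_add_inv {x : ℝ} (hx : 1 ≤ x) (h : 3 ≤ x + x⁻¹) : ρ ≤ x := by
  have hq : 0 ≤ x ^ 2 - 3 * x + 1 := by
    have := mul_le_mul_of_nonneg_right h (by positivity : 0 ≤ x)
    rw [add_mul, inv_mul_cancel₀ (by positivity)] at this
    nlinarith
  nlinarith [rho_sq, five_halves_le_rho]

lemma le_rho_add_of_add_inv_le {x ε : ℝ} (hx : ρ ≤ x) (h : x + x⁻¹ ≤ 3 + ε) :
    x ≤ ρ + 2 * ε := by
  have hρ := five_halves_le_rho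
  have hq : x ^ 2 - 3 * x + 1 ≤ ε * x := by
    have := mul_le_mul_of_nonneg_right h (by linarith : 0 ≤ x)
    rw [add_mul, inv_mul_cancel₀ (by linarith)] at this
    nlinarith
  have hfactor : (x - ρ) * (x + ρ - 3) = x ^ 2 - 3 * x + 1 := by linear_combination -rho_sq
  nlinarith [mul_le_mul_of_nonneg_left (by linarith : x / 2 ≤ x + ρ - 3) (by linarith : 0 ≤ x - ρ)]

lemma Complex.norm_add_inv_sub_two_add_norm_add_inv_add_two {w : ℂ} (hw : w ≠ 0) :
    ‖w + w⁻¹ - 2‖ + ‖w + w⁻¹ + 2‖ = 2 * (‖w‖ + ‖w‖⁻¹) := by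
  have hw' : ‖w‖ ≠ 0 := norm_ne_zero_iff.2 hw
  have hsub : w + w⁻¹ - 2 = (w - 1) ^ 2 / w := by field_simp; ring
  have hadd : w + w⁻¹ + 2 = (w + 1) ^ 2 / w := by field_simp; ring
  have hpar := parallelogram_law_with_norm ℝ w 1
  rw [hsub, hadd, norm_div, norm_div, norm_pow, norm_pow]
  simp only [norm_one] at hpar
  field_simp
  linear_combination hpar

lemma Complex.norm_add_inv_le_of_add_inv_eq {w z c : ℂ} (hw : w ≠ 0) (hz : z ≠ 0)
    (h : w + w⁻¹ = z + z⁻¹ + c) : ‖w‖ + ‖w‖⁻¹ ≤ ‖z‖ + ‖z‖⁻¹ + ‖c‖ := by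
  have hw' := norm_add_inv_sub_two_add_norm_add_inv_add_two hw
  have hz' := norm_add_inv_sub_two_add_norm_add_inv_add_two hz
  rw [h] at hw'
  have h1 : ‖z + z⁻¹ + c - 2‖ ≤ ‖z + z⁻¹ - 2‖ + ‖c‖ := by
    rw [add_sub_right_comm]; exact norm_add_le _ _
  have h2 : ‖z + z⁻¹ + c + 2‖ ≤ ‖z + z⁻¹ + 2‖ + ‖c‖ := by
    rw [add_right_comm]; exact norm_add_le _ _
  linarith

lemma eval_map_LTpoly_succ {K : Type*} [Field K] (n : ℕ) {z : K} (hz : z ≠ 0) :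
    ((LTpoly (n + 1)).map (Int.castRingHom K)).eval z =
      z ^ (n + 1) * (z ^ (n + 1) + (z ^ (n + 1))⁻¹ - (z + 1 + z⁻¹)) := by
  simp only [LTpoly, Polynomial.map_sub, Polynomial.map_add, Polynomial.map_pow,
    Polynomial.map_X, Polynomial.map_one, eval_sub, eval_add, eval_pow, eval_X, eval_one,
    Nat.add_sub_cancel]
  field_simp
  ring

lemma isRoot_map_LTpoly_succ_iff {K : Type*} [Field K] (n : ℕ) {z : K} (hz : z ≠ 0) :
    ((LTpoly (n + 1)).map (Int.castRingHom K)).IsRoot z ↔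
      z ^ (n + 1) + (z ^ (n + 1))⁻¹ = z + 1 + z⁻¹ := by
  rw [IsRoot, eval_map_LTpoly_succ n hz, mul_eq_zero, sub_eq_zero]
  simp [hz]

lemma map_LTpoly_succ_ne_zero (K : Type*) [Field K] (n : ℕ) :
    (LTpoly (n + 1)).map (Int.castRingHom K) ≠ 0 := by
  intro h
  have := eval_map_LTpoly_succ (K := K) n one_ne_zero
  rw [h] at this
  norm_num at this

lemma pow_le_rho_add_of_add_inv_le {h : ℝ} {n : ℕ} (hn : 1 ≤ n) (h0 : 0 ≤ h)
    (hρ : ρ ≤ h ^ (n + 1)) (hle : h ^ (n + 1) + (h ^ (n + 1))⁻¹ ≤ h + h⁻¹ + 1) :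
    h ^ (n + 1) ≤ ρ + 4 / n := by
  have hρ1 : 1 ≤ ρ := by linarith [five_halves_le_rho]
  have h1 : 1 ≤ h := (one_le_pow_iff_of_nonneg h0 (Nat.succ_ne_zero n)).1 (hρ1.trans hρ)
  have hinv : h⁻¹ ≤ 1 := inv_le_one_of_one_le₀ h1
  have hpow : h ^ n ≤ 3 := by
    have : h * h ^ n ≤ h * 3 := by
      rw [← pow_succ']
      linarith [inv_nonneg.2 (pow_nonneg h0 (n + 1))]
    exact le_of_mul_le_mul_left this (by linarith)
  have hbern : 1 + n * (h - 1) ≤ h ^ n := by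
    simpa using one_add_mul_le_pow (by linarith : (-2 : ℝ) ≤ h - 1) n
  have hn' : (0 : ℝ) < n := by exact_mod_cast hn
  have hclose : h - 1 ≤ 2 / n := by
    rw [le_div_iff₀ hn']
    linarith
  calc h ^ (n + 1) ≤ ρ + 2 * (2 / n) := le_rho_add_of_add_inv_le hρ (by linarith)
    _ = ρ + 4 / n := by ring

lemma exists_isRoot_LTpoly_mem_Icc (n : ℕ) (hn : 1 ≤ n) :
    ∃ x ∈ Set.Icc (1 : ℝ) 2, ((LTpoly (n + 1)).map (Int.castRingHom ℝ)).IsRoot x := by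
  set p := (LTpoly (n + 1)).map (Int.castRingHom ℝ)
  have h1 : p.eval 1 ≤ 0 := by rw [eval_map_LTpoly_succ n one_ne_zero]; norm_num
  have h2 : 0 ≤ p.eval 2 := by
    have h4 : (2 : ℝ) ^ 2 ≤ 2 ^ (n + 1) := pow_le_pow_right₀ (by norm_num) (by omega)
    have hinv : (0 : ℝ) ≤ (2 ^ (n + 1))⁻¹ := by positivity
    rw [eval_map_LTpoly_succ n two_ne_zero]
    exact mul_nonneg (by positivity) (by norm_num at h4 ⊢; linarith)
  exact intermediate_value_Icc (by norm_num) p.continuous.continuousOn ⟨h1, h2⟩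

lemma norm_le_house {p : ℤ[X]} (hp : p.map (Int.castRingHom ℂ) ≠ 0) {z : ℂ}
    (hz : (p.map (Int.castRingHom ℂ)).IsRoot z) : ‖z‖ ≤ house p :=
  le_csSup ((Polynomial.finite_setOfPred_isRoot hp).image _).bddAbove ⟨z, hz, rfl⟩

lemma exists_isRoot_norm_eq_house {p : ℤ[X]} (hp : p.map (Int.castRingHom ℂ) ≠ 0)
    (hh : house p ≠ 0) : ∃ z, (p.map (Int.castRingHom ℂ)).IsRoot z ∧ ‖z‖ = house p := by
  refine Set.Nonempty.csSup_mem ?_ ((Polynomial.finite_setOfPred_isRoot hp).image _)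
  by_contra hempty
  exact hh (by rw [house, Set.not_nonempty_iff_eq_empty.1 hempty, Real.sSup_empty])

lemma rho_le_house_LTpoly_pow (n : ℕ) (hn : 1 ≤ n) : ρ ≤ house (LTpoly (n + 1)) ^ (n + 1) := by
  obtain ⟨x, ⟨hx1, -⟩, hroot⟩ := exists_isRoot_LTpoly_mem_Icc n hn
  have hx0 : x ≠ 0 := by positivity
  rw [isRoot_map_LTpoly_succ_iff n hx0] at hroot
  have hxC : ((LTpoly (n + 1)).map (Int.castRingHom ℂ)).IsRoot (x : ℂ) := by
    rw [isRoot_map_LTpoly_succ_iff n (by exact_mod_cast hx0)]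
    exact_mod_cast hroot
  have hxh : x ≤ house (LTpoly (n + 1)) := by
    simpa [abs_of_nonneg (by linarith : (0 : ℝ) ≤ x)] using
      norm_le_house (map_LTpoly_succ_ne_zero ℂ n) hxC
  have hamgm : 2 ≤ x + x⁻¹ := by
    have := mul_inv_cancel₀ hx0
    nlinarith [inv_pos.2 (by linarith : (0 : ℝ) < x), sq_nonneg (x - 1)]
  calc ρ ≤ x ^ (n + 1) := rho_le_of_three_le_add_inv (one_le_pow₀ hx1) (by linarith)
    _ ≤ house (LTpoly (n + 1)) ^ (n + 1) := pow_le_pow_left₀ (by linarith) hxh _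

lemma house_LTpoly_pow_mem_Icc (n : ℕ) (hn : 1 ≤ n) :
    house (LTpoly (n + 1)) ^ (n + 1) ∈ Set.Icc ρ (ρ + 4 / n) := by
  have hρ := rho_le_house_LTpoly_pow n hn
  have hh : house (LTpoly (n + 1)) ≠ 0 := by
    intro h0
    rw [h0, zero_pow (Nat.succ_ne_zero n)] at hρ
    linarith [five_halves_le_rho]
  obtain ⟨z, hz, hnorm⟩ := exists_isRoot_norm_eq_house (map_LTpoly_succ_ne_zero ℂ n) hh
  have hz0 : z ≠ 0 := by
    rintro rfl
    exact hh (by simpa using hnorm.symm)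
  rw [isRoot_map_LTpoly_succ_iff n hz0] at hz
  have hJ := Complex.norm_add_inv_le_of_add_inv_eq (pow_ne_zero (n + 1) hz0) hz0
    (c := 1) (by rw [hz]; ring)
  rw [norm_pow, norm_one, hnorm] at hJ
  exact ⟨hρ, pow_le_rho_add_of_add_inv_le hn (hnorm ▸ norm_nonneg z) hρ hJ⟩

theorem stmt_15 :
    Filter.Tendsto (fun g : ℕ => (house (LTpoly g)) ^ g) Filter.atTop
      (nhds ((3 + Real.sqrt 5) / 2)) := by
  rw [← Filter.tendsto_add_atTop_iff_nat 1]
  have hupper : Filter.Tendsto (fun n : ℕ => ρ + 4 / (n : ℝ)) Filter.atTop (nhds ρ) := by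
    simpa using tendsto_const_nhds.add (tendsto_const_div_atTop_nhds_zero_nat (4 : ℝ))
  have hbounds := (Filter.eventually_ge_atTop 1).mono house_LTpoly_pow_mem_Icc
  exact tendsto_of_tendsto_of_tendsto_of_le_of_le' tendsto_const_nhds hupper
    (hbounds.mono fun _ h => h.1) (hbounds.mono fun _ h => h.2)

end
end
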